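/- Let g(z) = Σ_{n≥1} A_n z^n solve g = zψ(g) with ψ having nonnegative coefficients and b_0 = ψ(0) > 0. Define g_0 = g and g_k(z) = z(ψ(g_{k−1}(z)) − b_0) for k ≥ 1, with coefficients g_k(z) = Σ A_n^{(k)} z^n. Then for all n ≥ 1 and k ≥ 1: 0 ≤ A_n^{(k)} ≤ A_n^{(k−1)} ≤ A_n, and A_n^{(k)} = 0 whenever 1 ≤ n ≤ k. -/

import Mathlib

/-!
Write `φ = ψ - b₀`. The recursion becomes `g_{k+1} = X · φ(g_k)` and the Lagrange equation
`g_0 = X · ψ(g_0)`. Composition with a series of nonnegative coefficients is monotone in both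
arguments, and `0 ≤ φ ≤ ψ` coefficientwise, so `g_1 ≤ g_0` and then `g_{k+1} ≤ g_k` by induction.
Since `φ(0) = 0`, the order of `g_k` grows by one at each step, so `X^(k+1) ∣ g_k`.
-/

open PowerSeries

/-- Composition ψ(g) of formal power series, valid when g has zero constant term. -/
noncomputable def psComp (ψ g : PowerSeries ℝ) : PowerSeries ℝ :=
  PowerSeries.mk fun n => ∑ k ∈ Finset.range (n + 1),
    (PowerSeries.coeff (R := ℝ) k ψ) * (PowerSeries.coeff (R := ℝ) n (g ^ k))

namespace PowerSeries

theorem coeff_X_mul_le_coeff_X_mul {R : Type*} [Semiring R] [Preorder R] {f g : R⟦X⟧}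
    (h : ∀ n, coeff n f ≤ coeff n g) (n : ℕ) : coeff n (X * f) ≤ coeff n (X * g) := by
  rcases n with _ | n
  · simp
  · simpa using h n

variable {R : Type*} [CommSemiring R] [PartialOrder R] [IsOrderedRing R]

theorem coeff_mul_nonneg {f g : R⟦X⟧} {n : ℕ} (hf : ∀ i ≤ n, 0 ≤ coeff i f)
    (hg : ∀ i ≤ n, 0 ≤ coeff i g) : 0 ≤ coeff n (f * g) := by
  rw [coeff_mul]
  refine Finset.sum_nonneg fun p hp => ?_
  rw [Finset.HasAntidiagonal.mem_antidiagonal] at hp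
  exact mul_nonneg (hf p.1 (by omega)) (hg p.2 (by omega))

theorem coeff_pow_nonneg {f : R⟦X⟧} {n : ℕ} (hf : ∀ i ≤ n, 0 ≤ coeff i f) (k : ℕ) :
    0 ≤ coeff n (f ^ k) := by
  induction k generalizing n with
  | zero => rw [pow_zero, coeff_one]; split_ifs <;> simp
  | succ k ih =>
    rw [pow_succ]
    exact coeff_mul_nonneg (fun i hi => ih fun j hj => hf j (hj.trans hi)) hf

theorem coeff_mul_le_coeff_mul {f₁ f₂ g₁ g₂ : R⟦X⟧} (hf₁ : ∀ n, 0 ≤ coeff n f₁)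
    (hg₁ : ∀ n, 0 ≤ coeff n g₁) (hf : ∀ n, coeff n f₁ ≤ coeff n f₂)
    (hg : ∀ n, coeff n g₁ ≤ coeff n g₂) (n : ℕ) :
    coeff n (f₁ * g₁) ≤ coeff n (f₂ * g₂) := by
  rw [coeff_mul, coeff_mul]
  exact Finset.sum_le_sum fun p _ =>
    mul_le_mul (hf p.1) (hg p.2) (hg₁ p.2) ((hf₁ p.1).trans (hf p.1))

theorem coeff_pow_le_coeff_pow {f g : R⟦X⟧} (hf₀ : ∀ n, 0 ≤ coeff n f)
    (hfg : ∀ n, coeff n f ≤ coeff n g) (k n : ℕ) : coeff n (f ^ k) ≤ coeff n (g ^ k) := by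
  induction k generalizing n with
  | zero => rfl
  | succ k ih =>
    rw [pow_succ, pow_succ]
    exact coeff_mul_le_coeff_mul (fun _ => coeff_pow_nonneg (fun i _ => hf₀ i) k) hf₀ ih hfg n

end PowerSeries

@[simp]
theorem coeff_psComp (ψ g : ℝ⟦X⟧) (n : ℕ) :
    coeff n (psComp ψ g) = ∑ k ∈ Finset.range (n + 1), coeff k ψ * coeff n (g ^ k) :=
  coeff_mk _ _

theorem psComp_sub (ψ φ g : ℝ⟦X⟧) : psComp (ψ - φ) g = psComp ψ g - psComp φ g := by
  ext n
  simp [sub_mul, Finset.sum_sub_distrib]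

theorem psComp_C (b : ℝ) (g : ℝ⟦X⟧) : psComp (C b) g = C b := by
  ext n
  rw [coeff_psComp, Finset.sum_eq_single 0 (fun k _ hk => by simp [coeff_C, hk]) (by simp)]
  simp [coeff_C, coeff_one]

theorem coeff_psComp_nonneg {ψ g : ℝ⟦X⟧} (hψ : ∀ n, 0 ≤ coeff n ψ) {n : ℕ}
    (hg : ∀ i ≤ n, 0 ≤ coeff i g) : 0 ≤ coeff n (psComp ψ g) := by
  rw [coeff_psComp]
  exact Finset.sum_nonneg fun k _ => mul_nonneg (hψ k) (coeff_pow_nonneg hg k)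

theorem coeff_psComp_le_coeff_psComp {ψ φ g h : ℝ⟦X⟧} (hψ : ∀ n, 0 ≤ coeff n ψ)
    (hψφ : ∀ n, coeff n ψ ≤ coeff n φ) (hg : ∀ n, 0 ≤ coeff n g)
    (hgh : ∀ n, coeff n g ≤ coeff n h) (n : ℕ) :
    coeff n (psComp ψ g) ≤ coeff n (psComp φ h) := by
  simp only [coeff_psComp]
  refine Finset.sum_le_sum fun k _ => mul_le_mul (hψφ k) (coeff_pow_le_coeff_pow hg hgh k n)
    (coeff_pow_nonneg (fun i _ => hg i) k) ((hψ k).trans (hψφ k))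

theorem X_pow_dvd_psComp {ψ g : ℝ⟦X⟧} (hψ : constantCoeff ψ = 0) {m : ℕ} (hg : X ^ m ∣ g) :
    X ^ m ∣ psComp ψ g := by
  refine X_pow_dvd_iff.mpr fun n hn => ?_
  rw [coeff_psComp]
  refine Finset.sum_eq_zero fun k _ => ?_
  rcases k with _ | k
  · simp [hψ]
  · rw [X_pow_dvd_iff.mp (hg.trans (dvd_pow_self g k.succ_ne_zero)) n hn, mul_zero]

theorem coeff_nonneg_of_eq_X_mul_psComp {ψ g : ℝ⟦X⟧} (hψ : ∀ n, 0 ≤ coeff n ψ)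
    (hg : g = X * psComp ψ g) (n : ℕ) : 0 ≤ coeff n g := by
  induction n using Nat.strong_induction_on with | _ n ih =>
  rcases n with _ | n
  · rw [hg, coeff_zero_X_mul]
  · rw [hg, coeff_succ_X_mul]
    exact coeff_psComp_nonneg hψ fun i hi => ih i (by omega)

section Recursion

variable {φ : ℝ⟦X⟧} {h : ℕ → ℝ⟦X⟧}

theorem coeff_nonneg_of_eq_X_mul_psComp_succ (hφ : ∀ n, 0 ≤ coeff n φ)
    (hrec : ∀ k, h (k + 1) = X * psComp φ (h k)) (h₀ : ∀ n, 0 ≤ coeff n (h 0)) (k n : ℕ) :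
    0 ≤ coeff n (h k) := by
  induction k generalizing n with
  | zero => exact h₀ n
  | succ k ih =>
    rcases n with _ | n
    · simp [hrec]
    · rw [hrec, coeff_succ_X_mul]
      exact coeff_psComp_nonneg hφ fun i _ => ih i

theorem antitone_coeff_of_eq_X_mul_psComp_succ (hφ : ∀ n, 0 ≤ coeff n φ)
    (hrec : ∀ k, h (k + 1) = X * psComp φ (h k)) (h₀ : ∀ n, 0 ≤ coeff n (h 0))
    (h₁₀ : ∀ n, coeff n (h 1) ≤ coeff n (h 0)) (n : ℕ) : Antitone fun k => coeff n (h k) := by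
  suffices hstep : ∀ k n, coeff n (h (k + 1)) ≤ coeff n (h k) from
    antitone_nat_of_succ_le fun k => hstep k n
  intro k
  induction k with
  | zero => exact h₁₀
  | succ k ih =>
    have := coeff_X_mul_le_coeff_X_mul <| coeff_psComp_le_coeff_psComp hφ (fun _ => le_rfl)
      (coeff_nonneg_of_eq_X_mul_psComp_succ hφ hrec h₀ (k + 1)) ih
    rwa [← hrec, ← hrec] at this

theorem X_pow_dvd_of_eq_X_mul_psComp_succ (hφ : constantCoeff φ = 0)
    (hrec : ∀ k, h (k + 1) = X * psComp φ (h k)) (h₀ : X ∣ h 0) (k : ℕ) : X ^ (k + 1) ∣ h k := by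
  induction k with
  | zero => rwa [zero_add, pow_one]
  | succ k ih => rw [hrec, pow_succ']; exact mul_dvd_mul_left X (X_pow_dvd_psComp hφ ih)

end Recursion

theorem stmt_6_general (ψ : PowerSeries ℝ)
    (hψ : ∀ n, 0 ≤ PowerSeries.coeff (R := ℝ) n ψ)
    (g : PowerSeries ℝ)
    (hlag : g = PowerSeries.X * psComp ψ g)
    (gk : ℕ → PowerSeries ℝ)
    (hgk0 : gk 0 = g)
    (hgkrec : ∀ k, gk (k + 1) =
      PowerSeries.X * (psComp ψ (gk k) - PowerSeries.C (R := ℝ) (PowerSeries.constantCoeff (R := ℝ) ψ))) :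
    ∀ n k : ℕ, 1 ≤ n → 1 ≤ k →
      (0 ≤ PowerSeries.coeff (R := ℝ) n (gk k) ∧
       PowerSeries.coeff (R := ℝ) n (gk k) ≤ PowerSeries.coeff (R := ℝ) n (gk (k - 1)) ∧
       PowerSeries.coeff (R := ℝ) n (gk (k - 1)) ≤ PowerSeries.coeff (R := ℝ) n g) ∧
      (n ≤ k → PowerSeries.coeff (R := ℝ) n (gk k) = 0) := by
  set φ := ψ - C (constantCoeff ψ)
  have hrec (k : ℕ) : gk (k + 1) = X * psComp φ (gk k) := by
    rw [hgkrec, psComp_sub, psComp_C]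
  have hφ (n : ℕ) : 0 ≤ coeff n φ := by
    rcases n with _ | n <;> simp [φ, hψ]
  have hφψ (n : ℕ) : coeff n φ ≤ coeff n ψ := by
    rcases n with _ | n
    · simpa [φ] using hψ 0
    · simp [φ]
  have hg := coeff_nonneg_of_eq_X_mul_psComp hψ hlag
  have hgk₀ : ∀ n, 0 ≤ coeff n (gk 0) := hgk0 ▸ hg
  have hgk₁₀ : ∀ n, coeff n (gk 1) ≤ coeff n (gk 0) := by
    have := coeff_X_mul_le_coeff_X_mul
      (coeff_psComp_le_coeff_psComp hφ hφψ hg fun _ => le_rfl)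
    rwa [← hlag, ← hgk0, ← hrec] at this
  have hdvd := X_pow_dvd_of_eq_X_mul_psComp_succ (by simp [φ]) hrec
    (hgk0 ▸ hlag ▸ dvd_mul_right X _)
  intro n k _ hk
  obtain ⟨k, rfl⟩ := Nat.exists_eq_add_of_le' hk
  have hanti := antitone_coeff_of_eq_X_mul_psComp_succ hφ hrec hgk₀ hgk₁₀ n
  refine ⟨⟨coeff_nonneg_of_eq_X_mul_psComp_succ hφ hrec hgk₀ _ n, hanti k.le_succ, ?_⟩,
    fun hnk => X_pow_dvd_iff.mp (hdvd _) n (by omega)⟩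
  simpa [hgk0] using hanti k.zero_le

/-- For g = Σ A_n z^n solving g = zψ(g), ψ with nonnegative coefficients and
b_0 = ψ(0) > 0, the iterates g_0 = g, g_k = z(ψ(g_{k−1}) − b_0) have coefficients A_n^{(k)}
satisfying 0 ≤ A_n^{(k)} ≤ A_n^{(k−1)} ≤ A_n for n, k ≥ 1, and A_n^{(k)} = 0 for 1 ≤ n ≤ k. -/
theorem stmt_6 (ψ : PowerSeries ℝ)
    (hψ : ∀ n, 0 ≤ PowerSeries.coeff (R := ℝ) n ψ)
    (hb0 : 0 < PowerSeries.constantCoeff (R := ℝ) ψ)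
    (g : PowerSeries ℝ)
    (hg0 : PowerSeries.constantCoeff (R := ℝ) g = 0)
    (hlag : g = PowerSeries.X * psComp ψ g)
    (gk : ℕ → PowerSeries ℝ)
    (hgk0 : gk 0 = g)
    (hgkrec : ∀ k, gk (k + 1) =
      PowerSeries.X * (psComp ψ (gk k) - PowerSeries.C (R := ℝ) (PowerSeries.constantCoeff (R := ℝ) ψ))) :
    ∀ n k : ℕ, 1 ≤ n → 1 ≤ k →
      (0 ≤ PowerSeries.coeff (R := ℝ) n (gk k) ∧
       PowerSeries.coeff (R := ℝ) n (gk k) ≤ PowerSeries.coeff (R := ℝ) n (gk (k - 1)) ∧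
       PowerSeries.coeff (R := ℝ) n (gk (k - 1)) ≤ PowerSeries.coeff (R := ℝ) n g) ∧
      (n ≤ k → PowerSeries.coeff (R := ℝ) n (gk k) = 0) :=
  stmt_6_general ψ hψ g hlag gk hgk0 hgkrec
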